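/- Let K be a field, q, u ∈ K*, and let Q, Q̃, P : K* → K be functions. Suppose a_0 ∈ K* satisfies Q(a_0) = 0, Q̃(a_0) ≠ 0, Q(a_0 q^{−2}) ≠ 0, P(a_0 q^{−1}) ≠ 0, and that the relation u·Q(a q^{−1})·Q̃(a q) − u^{−1}·Q(a q)·Q̃(a q^{−1}) = P(a) holds for a = a_0 q and for a = a_0 q^{−1}. Then −u^{−2} · Q(a_0 q^2)/Q(a_0 q^{−2}) = P(a_0 q)/P(a_0 q^{−1}). -/

import Mathlib

/-!
At a zero `a₀` of `Q`, the relation at `a = a₀q` loses its first term and the relation at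
`a = a₀q⁻¹` loses its second, so `P(a₀q) = −u⁻¹ Q(a₀q²) Q̃(a₀)` and
`P(a₀q⁻¹) = u Q(a₀q⁻²) Q̃(a₀)`. Dividing, the common factor `Q̃(a₀)` cancels; it is nonzero
because `P(a₀q⁻¹)` is.
-/

lemma neg_inv_mul_div_mul_eq {K : Type*} [Field K] {u A B T : K} (h : u * B * T ≠ 0) :
    -(u⁻¹ * A * T) / (u * B * T) = -(u⁻¹ ^ 2) * (A / B) := by
  obtain ⟨huB, hT⟩ := mul_ne_zero_iff.mp h
  obtain ⟨hu, hB⟩ := mul_ne_zero_iff.mp huB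
  field_simp

theorem bethe_ansatz_from_QQ_general {K : Type*} [Field K] (q u : K) (hq : q ≠ 0)
    (Q Qt P : K → K) (a₀ : K)
    (hQ0 : Q a₀ = 0)
    (hPden : P (a₀ * q⁻¹) ≠ 0)
    (hrel : ∀ a : K, a = a₀ * q ∨ a = a₀ * q⁻¹ →
      u * Q (a * q⁻¹) * Qt (a * q) - u⁻¹ * Q (a * q) * Qt (a * q⁻¹) = P a) :
    -(u⁻¹ ^ 2) * (Q (a₀ * q ^ 2) / Q (a₀ * q⁻¹ ^ 2)) = P (a₀ * q) / P (a₀ * q⁻¹) := by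
  have hP_succ : P (a₀ * q) = -(u⁻¹ * Q (a₀ * q ^ 2) * Qt a₀) := by
    rw [← hrel _ (Or.inl rfl), mul_inv_cancel_right₀ hq, hQ0, mul_assoc a₀ q q, ← sq]
    ring
  have hP_pred : P (a₀ * q⁻¹) = u * Q (a₀ * q⁻¹ ^ 2) * Qt a₀ := by
    rw [← hrel _ (Or.inr rfl), inv_mul_cancel_right₀ hq, hQ0, mul_assoc a₀ q⁻¹ q⁻¹, ← sq]
    ring
  rw [hP_pred] at hPden
  rw [hP_succ, hP_pred, neg_inv_mul_div_mul_eq hPden]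

/-- Bethe Ansatz derivation from the QQ̃-system: if `a₀` is a zero of `Q` which is not a
zero of `Q̃`, with `Q(a₀q^{−2}) ≠ 0` and `P(a₀q^{−1}) ≠ 0`, and the relation
`u Q(aq^{−1}) Q̃(aq) − u^{−1} Q(aq) Q̃(aq^{−1}) = P(a)` holds for `a = a₀q` and
`a = a₀q^{−1}`, then `−u^{−2} Q(a₀q²)/Q(a₀q^{−2}) = P(a₀q)/P(a₀q^{−1})`. -/
theorem bethe_ansatz_from_QQ {K : Type*} [Field K] (q u : K) (hq : q ≠ 0) (hu : u ≠ 0)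
    (Q Qt P : K → K) (a₀ : K) (ha₀ : a₀ ≠ 0)
    (hQ0 : Q a₀ = 0) (hQt : Qt a₀ ≠ 0)
    (hQden : Q (a₀ * q⁻¹ ^ 2) ≠ 0) (hPden : P (a₀ * q⁻¹) ≠ 0)
    (hrel : ∀ a : K, a = a₀ * q ∨ a = a₀ * q⁻¹ →
      u * Q (a * q⁻¹) * Qt (a * q) - u⁻¹ * Q (a * q) * Qt (a * q⁻¹) = P a) :
    -(u⁻¹ ^ 2) * (Q (a₀ * q ^ 2) / Q (a₀ * q⁻¹ ^ 2)) = P (a₀ * q) / P (a₀ * q⁻¹) :=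
  bethe_ansatz_from_QQ_general q u hq Q Qt P a₀ hQ0 hPden hrel
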